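/- arXiv:1906.03619 — 5 statements merged into one kernel-verified Lean document; each statement's English description precedes it below -/
import Mathlib

section
/- With Γ_t(x) := (1 - e^{-2t}x²)⁻¹ · [[e^{3t} - x², x(e^{3t} - 1)],[x(e^{t} - e^{2t}), e^{t} - x² e^{2t}]] and B₀ = diag(3,1), for any x ∈ ℂ with 0 < |x| < 1 the limit lim_{t→∞} exp(-tB₀)·Γ_t(x) does not exist (the (2,2) entry, (e^{-t} - x² e^{t})/(1 - e^{-2t}x²), diverges as t → ∞). -/
/-!
Since `B₀` is diagonal, `exp (-t B₀) = diag (e^{-3t}, e^{-t})`, so the `(2,2)` entry of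
`exp (-t B₀) Γ_t(x)` is `e^{-t}` times that of `Γ_t(x)`, namely
`(1 - x² e^t) / (1 - e^{-2t} x²)`. Its denominator tends to `1` while its numerator has norm at
least `|x|² e^t - 1`, so the entry diverges and the matrix limit cannot exist. The same estimate,
with the bounded term `e^{-t}` in place of `1`, gives the divergence of the displayed quotient.
-/

open NormedSpace Filter Topology

lemma tendsto_norm_sub_atTop {α E : Type*} [SeminormedAddCommGroup E] {l : Filter α}
    {f g : α → E} {c : E} (hf : Tendsto (‖f ·‖) l atTop) (hg : Tendsto g l (𝓝 c)) :
    Tendsto (fun a => ‖g a - f a‖) l atTop := by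
  refine tendsto_atTop_mono (fun a => ?_) (hf.atTop_add hg.norm.neg)
  rw [← sub_eq_add_neg, norm_sub_rev]
  exact norm_sub_norm_le _ _

lemma tendsto_norm_div_atTop {α 𝕜 : Type*} [NormedDivisionRing 𝕜] {l : Filter α}
    {f g : α → 𝕜} {c : 𝕜} (hf : Tendsto (‖f ·‖) l atTop) (hg : Tendsto g l (𝓝 c))
    (hc : c ≠ 0) : Tendsto (fun a => ‖f a / g a‖) l atTop := by
  simpa only [div_eq_mul_inv, norm_mul, norm_inv] using
    hf.atTop_mul_pos (inv_pos.2 (norm_pos_iff.2 hc)) (hg.norm.inv₀ (norm_ne_zero_iff.2 hc))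

lemma Complex.tendsto_exp_neg_mul_atTop {c : ℂ} (hc : 0 < c.re) :
    Tendsto (fun t : ℝ => Complex.exp (-c * t)) atTop (𝓝 0) := by
  refine Complex.tendsto_exp_comap_re_atBot.comp (tendsto_comap_iff.2 ?_)
  simpa [Function.comp_def] using tendsto_id.const_mul_atTop_of_neg (neg_neg_of_pos hc)

lemma Complex.tendsto_norm_mul_exp_atTop {c : ℂ} (hc : c ≠ 0) :
    Tendsto (fun t : ℝ => ‖c * Complex.exp t‖) atTop atTop := by
  simpa [Complex.norm_exp] using Real.tendsto_exp_atTop.const_mul_atTop (norm_pos_iff.2 hc)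

lemma tendsto_norm_sub_sq_mul_exp_div_atTop {x : ℂ} (hx : x ≠ 0) {a : ℝ → ℂ} {a₀ : ℂ}
    (ha : Tendsto a atTop (𝓝 a₀)) :
    Tendsto (fun t : ℝ => ‖(a t - x ^ 2 * Complex.exp t) /
      (1 - Complex.exp (-2 * t) * x ^ 2)‖) atTop atTop := by
  have hden : Tendsto (fun t : ℝ => 1 - Complex.exp (-2 * t) * x ^ 2) atTop (𝓝 1) := by
    simpa using tendsto_const_nhds.sub
      ((Complex.tendsto_exp_neg_mul_atTop (c := 2) (by norm_num)).mul_const (x ^ 2))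
  exact tendsto_norm_div_atTop
    (tendsto_norm_sub_atTop (Complex.tendsto_norm_mul_exp_atTop (pow_ne_zero 2 hx)) ha)
    hden one_ne_zero

lemma Matrix.exp_smul_diagonal {n : Type*} [Fintype n] [DecidableEq n] (s : ℂ) (d : n → ℂ) :
    exp (s • Matrix.diagonal d) = Matrix.diagonal fun i => Complex.exp (s * d i) := by
  rw [← Matrix.diagonal_smul, Matrix.exp_diagonal]
  ext i j
  simp [Pi.exp_def, Complex.exp_eq_exp_ℂ]

lemma Matrix.diagonal_mul_smul_apply_self {n R : Type*} [Fintype n] [DecidableEq n]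
    [CommSemiring R] (d : n → R) (s : R) (M : Matrix n n R) (i : n) :
    (Matrix.diagonal d * (s • M)) i i = s * (d i * M i i) := by
  rw [Matrix.diagonal_mul, Matrix.smul_apply, smul_eq_mul, mul_left_comm]

/-- For the semicocycle
`Γ_t(x) = (1 - e^{-2t}x²)⁻¹ • [[e^{3t} - x², x(e^{3t}-1)],[x(e^t - e^{2t}), e^t - x²e^{2t}]]`
and `B₀ = diag(3,1)`, for `0 < |x| < 1` the limit `lim_{t→∞} exp(-tB₀)·Γ_t(x)` does not
exist; in particular the `(2,2)` entry diverges. -/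
theorem stmt_6
    (B₀ : Matrix (Fin 2) (Fin 2) ℂ) (hB₀ : B₀ = Matrix.diagonal ![3, 1])
    (Γ : ℝ → ℂ → Matrix (Fin 2) (Fin 2) ℂ)
    (hΓ : ∀ (t : ℝ) (x : ℂ), Γ t x =
      (1 - Complex.exp (-2 * t) * x ^ 2)⁻¹ •
        !![Complex.exp (3 * t) - x ^ 2, x * (Complex.exp (3 * t) - 1);
           x * (Complex.exp t - Complex.exp (2 * t)),
           Complex.exp t - x ^ 2 * Complex.exp (2 * t)]) :
    ∀ x : ℂ, 0 < ‖x‖ → ‖x‖ < 1 →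
      (¬ ∃ L : Matrix (Fin 2) (Fin 2) ℂ,
          Tendsto (fun t : ℝ => exp (-(t : ℂ) • B₀) * Γ t x) atTop (nhds L)) ∧
      Tendsto (fun t : ℝ => norm
          ((Complex.exp (-t) - x ^ 2 * Complex.exp t) / (1 - Complex.exp (-2 * t) * x ^ 2)))
        atTop atTop := by
  intro x hx _
  have hx₀ : x ≠ 0 := norm_pos_iff.1 hx
  have hexp_neg : Tendsto (fun t : ℝ => Complex.exp (-t)) atTop (𝓝 0) := by
    simpa using Complex.tendsto_exp_neg_mul_atTop (c := 1) one_pos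
  refine ⟨?_, tendsto_norm_sub_sq_mul_exp_div_atTop hx₀ hexp_neg⟩
  rintro ⟨L, hL⟩
  have hentry (t : ℝ) : (exp (-(t : ℂ) • B₀) * Γ t x) 1 1 =
      (1 - x ^ 2 * Complex.exp t) / (1 - Complex.exp (-2 * t) * x ^ 2) := by
    have hcancel : Complex.exp (-t) * (Complex.exp t - x ^ 2 * Complex.exp (2 * t)) =
        1 - x ^ 2 * Complex.exp t := by
      rw [mul_sub, ← Complex.exp_add, mul_left_comm, ← Complex.exp_add, neg_add_cancel,
        Complex.exp_zero, show -(t : ℂ) + 2 * t = t by ring]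
    rw [hB₀, hΓ, Matrix.exp_smul_diagonal, Matrix.diagonal_mul_smul_apply_self]
    simp only [Matrix.of_apply, Matrix.cons_val_one, Matrix.cons_val_zero, mul_one, hcancel]
    exact inv_mul_eq_div _ _
  have hdiv : Tendsto (fun t : ℝ => ‖(exp (-(t : ℂ) • B₀) * Γ t x) 1 1‖) atTop atTop := by
    simpa only [hentry] using tendsto_norm_sub_sq_mul_exp_div_atTop hx₀ tendsto_const_nhds
  exact not_tendsto_atTop_of_tendsto_nhds (tendsto_pi_nhds.1 (tendsto_pi_nhds.1 hL 1) 1).norm hdiv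
end

section
/- Let {F_t} be a semigroup on D, {Γ_t} a semicocycle over it with values in Banach algebra A, B₀ ∈ A. If M(x) := lim_{s→∞} exp(-sB₀) Γ_s(x) exists for all x ∈ D, then M satisfies the intertwining identity M(F_t(x)) · Γ_t(x) = exp(tB₀) · M(x) for all t ≥ 0 and x ∈ D. -/
open NormedSpace Filter Topology

theorem NormedSpace.exp_smul_mul_exp_smul {A : Type*} [NormedRing A] [NormedAlgebra ℝ A]
    [CompleteSpace A] (a : A) (s t : ℝ) :
    exp (s • a) * exp (t • a) = exp ((s + t) • a) := by
  have mem_ball (b : A) : b ∈ Metric.eball (0 : A) (expSeries ℝ A).radius :=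
    (expSeries_radius_eq_top ℝ A).symm ▸ edist_lt_top _ _
  rw [add_smul, exp_add_of_commute_of_mem_ball (((Commute.refl a).smul_left s).smul_right t)
    (mem_ball _) (mem_ball _)]

theorem tendsto_exp_neg_smul_mul_cocycle_comp {A D : Type*} [NormedRing A] [NormedAlgebra ℝ A]
    [CompleteSpace A] (F : ℝ → D → D) (Γ : ℝ → D → A)
    (hΓchain : ∀ t s : ℝ, 0 ≤ t → 0 ≤ s → ∀ x : D, Γ t (F s x) * Γ s x = Γ (t + s) x)
    (B : A) {t : ℝ} (ht : 0 ≤ t) {x : D} {L : A}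
    (hx : Tendsto (fun s : ℝ => exp ((-s) • B) * Γ s x) atTop (𝓝 L)) :
    Tendsto (fun s : ℝ => exp ((-s) • B) * Γ s (F t x) * Γ t x) atTop
      (𝓝 (exp (t • B) * L)) := by
  have hshift := (hx.comp (tendsto_atTop_add_const_right atTop t tendsto_id)).const_mul
    (exp (t • B))
  refine hshift.congr' ?_
  filter_upwards [eventually_ge_atTop 0] with s hs
  calc exp (t • B) * (exp ((-(s + t)) • B) * Γ (s + t) x)
      = exp ((t + -(s + t)) • B) * Γ (s + t) x := by
        rw [← mul_assoc, exp_smul_mul_exp_smul]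
    _ = exp ((-s) • B) * Γ s (F t x) * Γ t x := by
        rw [mul_assoc, hΓchain s t hs ht x, show t + -(s + t) = -s by ring]

theorem stmt_10_general {A D : Type*} [NormedRing A] [NormedAlgebra ℂ A] [CompleteSpace A]
    (F : ℝ → D → D)
    (Γ : ℝ → D → A)
    (hΓchain : ∀ t s : ℝ, 0 ≤ t → 0 ≤ s → ∀ x : D, Γ t (F s x) * Γ s x = Γ (t + s) x)
    (B₀ : A) (M : D → A)
    (hlim : ∀ x : D, Tendsto (fun s : ℝ => exp ((-s) • B₀) * Γ s x) atTop (nhds (M x))) :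
    ∀ t : ℝ, 0 ≤ t → ∀ x : D, M (F t x) * Γ t x = exp (t • B₀) * M x := fun t ht x =>
  tendsto_nhds_unique ((hlim (F t x)).mul_const (Γ t x))
    (tendsto_exp_neg_smul_mul_cocycle_comp F Γ hΓchain B₀ ht (hlim x))

/-- If `M(x) := lim_{s→∞} e^{-sB₀}Γ_s(x)` exists for a semicocycle `{Γ_t}`
over a semigroup `{F_t}`, then `M(F_t(x))·Γ_t(x) = e^{tB₀}·M(x)` for all `t ≥ 0`, `x`. -/
theorem stmt_10 {A D : Type*} [NormedRing A] [NormedAlgebra ℂ A] [CompleteSpace A]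
    (F : ℝ → D → D)
    (hFsg : ∀ t s : ℝ, 0 ≤ t → 0 ≤ s → ∀ x : D, F (t + s) x = F t (F s x))
    (hF0 : ∀ x : D, F 0 x = x)
    (Γ : ℝ → D → A)
    (hΓchain : ∀ t s : ℝ, 0 ≤ t → 0 ≤ s → ∀ x : D, Γ t (F s x) * Γ s x = Γ (t + s) x)
    (hΓ0 : ∀ x : D, Γ 0 x = 1)
    (B₀ : A) (M : D → A)
    (hlim : ∀ x : D, Tendsto (fun s : ℝ => exp ((-s) • B₀) * Γ s x) atTop (nhds (M x))) :
    ∀ t : ℝ, 0 ≤ t → ∀ x : D, M (F t x) * Γ t x = exp (t • B₀) * M x :=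
  stmt_10_general F Γ hΓchain B₀ M hlim
end

section
/- Let A be a complex unital Banach algebra, B₀ ∈ A, and B̃(t) := exp(−tB₀)·b(t)·exp(tB₀) − B₀ where b : [0,∞) → A satisfies ‖b(t) − B₀‖ ≤ C e^{−αt} for constants C > 0, α > 0 and all t ≥ t*. If moreover κ₊(B₀) − κ₋(B₀) < α (with κ± the exponential indices), then ∫_{t*}^∞ ‖B̃(t)‖ dt < ∞. -/
open NormedSpace Filter MeasureTheory

/-!
Since `exp (t • B₀)` commutes with `B₀`, conjugation fixes `B₀`, so
`B̃(t) = e^{-tB₀} (b(t) - B₀) e^{tB₀}` and `‖B̃(t)‖ ≤ ‖e^{-tB₀}‖ C e^{-αt} ‖e^{tB₀}‖` for `t ≥ t*`.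
By the definition of `κ±`, for every `ε > 0` the two exponential factors are eventually bounded by
`e^{(-κ₋+ε)t}` and `e^{(κ₊+ε)t}`, so this continuous majorant is `O(e^{-(α - κ₊ + κ₋ - 2ε)t})`,
which is integrable on `[t*, ∞)` as soon as `2ε < α - (κ₊ - κ₋)`.
-/

section

variable {𝔸 : Type*} [NormedRing 𝔸] [NormedAlgebra ℝ 𝔸]

theorem NormedSpace.norm_exp_le_exp_norm [NormOneClass 𝔸] (x : 𝔸) :
    ‖exp x‖ ≤ Real.exp ‖x‖ := by
  rw [Real.exp_eq_exp_ℝ, exp_eq_tsum ℝ (𝔸 := 𝔸), exp_eq_tsum ℝ (𝔸 := ℝ)]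
  refine (norm_tsum_le_tsum_norm (norm_expSeries_summable' x)).trans ?_
  refine Summable.tsum_le_tsum (fun n => ?_) (norm_expSeries_summable' x)
    (expSeries_summable' (𝕂 := ℝ) ‖x‖)
  rw [norm_smul, smul_eq_mul, Real.norm_of_nonneg (by positivity)]
  gcongr
  exact norm_pow_le x n

/-- Without this bound the `ℝ`-valued `limsup` defining `κ₊` would be a junk value. -/
theorem isBoundedUnder_log_norm_exp_smul_div [NormOneClass 𝔸] (B : 𝔸) :
    IsBoundedUnder (· ≤ ·) atTop fun t : ℝ => Real.log ‖exp (t • B)‖ / t := by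
  refine isBoundedUnder_of_eventually_le (a := ‖B‖) ?_
  filter_upwards [eventually_gt_atTop 0] with t ht
  rw [div_le_iff₀ ht]
  rcases (norm_nonneg (exp (t • B))).eq_or_lt with h0 | hpos
  · rw [← h0, Real.log_zero]; positivity
  · rw [Real.log_le_iff_le_exp hpos, mul_comm]
    simpa [norm_smul, abs_of_pos ht] using norm_exp_le_exp_norm (t • B)

theorem eventually_norm_exp_smul_le [NormOneClass 𝔸] (B : 𝔸) {κ : ℝ}
    (hκ : limsup (fun t : ℝ => Real.log ‖exp (t • B)‖ / t) atTop < κ) :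
    ∀ᶠ t in atTop, ‖exp (t • B)‖ ≤ Real.exp (κ * t) := by
  filter_upwards [eventually_lt_of_limsup_lt hκ (isBoundedUnder_log_norm_exp_smul_div B),
    eventually_gt_atTop 0] with t hlt ht
  exact (Real.le_exp_log _).trans (Real.exp_le_exp.2 ((div_lt_iff₀ ht).1 hlt).le)

theorem exp_neg_smul_mul_mul_exp_smul_sub [CompleteSpace 𝔸] (B b : 𝔸) (t : ℝ) :
    exp ((-t) • B) * b * exp (t • B) - B = exp ((-t) • B) * (b - B) * exp (t • B) := by
  let : NormedAlgebra ℚ 𝔸 := .restrictScalars ℚ ℝ 𝔸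
  have hB : exp ((-t) • B) * B * exp (t • B) = B := by
    rw [neg_smul]
    exact SemiconjBy.exp_neg_mul_mul_exp_eq_self ((Commute.refl B).smul_right t)
  rw [mul_sub, sub_mul, hB]

theorem isBigO_norm_exp_neg_smul_mul_norm_exp_smul [NormOneClass 𝔸] (B : 𝔸) {κp κm : ℝ}
    (hp : limsup (fun t : ℝ => Real.log ‖exp (t • B)‖ / t) atTop < κp)
    (hm : limsup (fun t : ℝ => Real.log ‖exp ((-t) • B)‖ / t) atTop < -κm) :
    (fun t : ℝ => ‖exp ((-t) • B)‖ * ‖exp (t • B)‖) =O[atTop]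
      fun t => Real.exp ((κp - κm) * t) := by
  simp only [neg_smul, ← smul_neg] at hm ⊢
  refine Asymptotics.IsBigO.of_bound 1 ?_
  filter_upwards [eventually_norm_exp_smul_le B hp, eventually_norm_exp_smul_le (-B) hm]
    with t hBp hBm
  rw [one_mul, Real.norm_of_nonneg (by positivity), Real.norm_of_nonneg (Real.exp_pos _).le,
    sub_eq_neg_add, add_mul, Real.exp_add]
  exact mul_le_mul hBm hBp (norm_nonneg _) (Real.exp_pos _).le

end

theorem stmt_16_general {A : Type*} [NormedRing A] [NormedAlgebra ℂ A] [CompleteSpace A]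
    [NormOneClass A]
    (B₀ : A) (b : ℝ → A) (C α tstar : ℝ)
    (hb : ∀ t : ℝ, tstar ≤ t → ‖b t - B₀‖ ≤ C * Real.exp (-α * t))
    (κp κm : ℝ)
    (hκp : κp = limsup (fun t : ℝ => Real.log ‖exp (t • B₀)‖ / t) atTop)
    (hκm : κm = -limsup (fun t : ℝ => Real.log ‖exp ((-t) • B₀)‖ / t) atTop)
    (hgap : κp - κm < α)
    (Bt : ℝ → A)
    (hBt : ∀ t : ℝ, Bt t = exp ((-t) • B₀) * b t * exp (t • B₀) - B₀) :
    ∫⁻ t in Set.Ici tstar, ENNReal.ofReal ‖Bt t‖ < ⊤ := by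
  let : NormedAlgebra ℚ A := .restrictScalars ℚ ℂ A
  set ε := (α - (κp - κm)) / 4 with hε
  let g : ℝ → ℝ := fun t => ‖exp ((-t) • B₀)‖ * (C * Real.exp (-α * t)) * ‖exp (t • B₀)‖
  have hg_decay : g =O[atTop] fun t => Real.exp (-(2 * ε) * t) := by
    have hconj := isBigO_norm_exp_neg_smul_mul_norm_exp_smul B₀ (κp := κp + ε) (κm := κm - ε)
      (by rw [← hκp]; linarith) (by linarith)
    refine (((Asymptotics.isBigO_refl (fun t => Real.exp (-α * t)) atTop).mul hconj).const_mul_left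
      C).congr' (.of_forall fun t => by ring) (.of_forall fun t => ?_)
    simp only [← Real.exp_add, hε]
    ring_nf
  have hg_int : IntegrableOn g (Set.Ici tstar) :=
    (integrableOn_Ici_iff_integrableOn_Ioi (by finiteness)).2 <|
      integrable_of_isBigO_exp_neg (by linarith) (by fun_prop) hg_decay
  have hBt_le : ∀ t, tstar ≤ t → ‖Bt t‖ ≤ g t := fun t ht => by
    rw [hBt, exp_neg_smul_mul_mul_exp_smul_sub]
    exact norm_mul₃_le.trans <| mul_le_mul_of_nonneg_right
      (mul_le_mul_of_nonneg_left (hb t ht) (norm_nonneg _)) (norm_nonneg _)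
  calc ∫⁻ t in Set.Ici tstar, ENNReal.ofReal ‖Bt t‖
      ≤ ∫⁻ t in Set.Ici tstar, ENNReal.ofReal (g t) :=
        setLIntegral_mono (by fun_prop) fun t ht => ENNReal.ofReal_le_ofReal (hBt_le t ht)
    _ < ⊤ := hg_int.setLIntegral_lt_top

/-- If `‖b(t) − B₀‖ ≤ Ce^{−αt}` for `t ≥ t*` and
`κ₊(B₀) − κ₋(B₀) < α` (exponential Lyapunov indices), then
`∫_{t*}^∞ ‖e^{−tB₀} b(t) e^{tB₀} − B₀‖ dt < ∞`. -/
theorem stmt_16 {A : Type*} [NormedRing A] [NormedAlgebra ℂ A] [CompleteSpace A]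
    [NormOneClass A]
    (B₀ : A) (b : ℝ → A) (C α tstar : ℝ) (hC : 0 < C) (hα : 0 < α)
    (hb : ∀ t : ℝ, tstar ≤ t → ‖b t - B₀‖ ≤ C * Real.exp (-α * t))
    (κp κm : ℝ)
    (hκp : κp = limsup (fun t : ℝ => Real.log ‖exp (t • B₀)‖ / t) atTop)
    (hκm : κm = -limsup (fun t : ℝ => Real.log ‖exp ((-t) • B₀)‖ / t) atTop)
    (hgap : κp - κm < α)
    (Bt : ℝ → A)
    (hBt : ∀ t : ℝ, Bt t = exp ((-t) • B₀) * b t * exp (t • B₀) - B₀) :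
    ∫⁻ t in Set.Ici tstar, ENNReal.ofReal ‖Bt t‖ < ⊤ :=
  stmt_16_general B₀ b C α tstar hb κp κm hκp hκm hgap Bt hBt
end

section
/- Let c₀ be the space of complex sequences converging to 0 with sup-norm, F_t(x)_k = e^{−t/k} x_k the diagonal semigroup on the open unit ball D of c₀, and M(x) = exp(Σ_{k≥1} (2x_k)^k) (a well-defined nonzero complex number for ‖x‖ < 1). Then for every polynomial map N : c₀ → ℂ bounded on the unit ball with |N(y) − 1| ≤ C‖y‖ for some C > 0, the convergence N(F_t(x))·M(F_t(x))⁻¹ → 1 as t → ∞ fails to be uniform on the closed ball of radius 1/2: for the points x⁽ⁿ⁾ = (1/2,…,1/2,0,0,…) (n halves) one has M(F_t(x⁽ⁿ⁾))⁻¹ = e^{−n e^{−t}} and |N(F_t(x⁽ⁿ⁾))M(F_t(x⁽ⁿ⁾))⁻¹ − 1| ≥ 1 − e^{−n e^{−t}}(1 + C/2) for all t > 0. -/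
open scoped ZeroAtInfty
open Filter

/-!
At `x⁽ⁿ⁾` only the first `n` terms of the series defining `M(F_t x⁽ⁿ⁾)` are nonzero, and each
equals `(2 · e^{-t/k} · 1/2)^k = e^{-t}`, so `M(F_t(x⁽ⁿ⁾))⁻¹ = e^{-n e^{-t}}`. The semigroup is
contractive, so `‖F_t(x⁽ⁿ⁾)‖ ≤ 1/2` and `|N(F_t(x⁽ⁿ⁾))| ≤ 1 + C/2`; the lower bound follows
from the triangle inequality. For fixed `t` it tends to `1` as `n → ∞`, so no `t` brings
`N(F_t(x))M(F_t(x))⁻¹` within `1/2` of `1` on the whole ball.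
-/

namespace ZeroAtInftyContinuousMap

variable {α β : Type*} [TopologicalSpace α] [SeminormedAddCommGroup β]

theorem norm_le_of_forall_norm_apply_le (f : C₀(α, β)) {c : ℝ} (hc : 0 ≤ c)
    (h : ∀ x, ‖f x‖ ≤ c) : ‖f‖ ≤ c := by
  rw [← norm_toBCF_eq_norm]
  exact (BoundedContinuousFunction.norm_le hc).2 h

theorem norm_le_norm_of_forall_norm_apply_le {f g : C₀(α, β)} (h : ∀ x, ‖f x‖ ≤ ‖g x‖) :
    ‖f‖ ≤ ‖g‖ :=
  f.norm_le_of_forall_norm_apply_le (norm_nonneg g) fun x =>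
    (h x).trans (BoundedContinuousFunction.norm_coe_le_norm g.toBCF x)

end ZeroAtInftyContinuousMap

theorem one_sub_norm_mul_le_norm_mul_sub_one {R : Type*} [SeminormedRing R] [NormOneClass R]
    {a m : R} {D : ℝ} (ha : ‖a - 1‖ ≤ D) : 1 - ‖m‖ * (1 + D) ≤ ‖a * m - 1‖ := by
  have ha' : ‖a‖ ≤ 1 + D := by
    simpa only [norm_one] using (norm_le_norm_add_norm_sub' a 1).trans (add_le_add_right ha _)
  have hm : ‖a * m‖ ≤ ‖m‖ * (1 + D) :=
    (norm_mul_le a m).trans (by rw [mul_comm]; gcongr)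
  calc 1 - ‖m‖ * (1 + D) ≤ ‖(1 : R)‖ - ‖a * m‖ := by rw [norm_one]; linarith
    _ ≤ ‖1 - a * m‖ := norm_sub_norm_le _ _
    _ = ‖a * m - 1‖ := norm_sub_rev _ _

theorem not_tendstoUniformlyOn_of_eventually_exists_le_dist {ι α β : Type*}
    [PseudoMetricSpace β] {F : ι → α → β} {f : α → β} {l : Filter ι} [l.NeBot] {s : Set α}
    {ε : ℝ} (hε : 0 < ε) (h : ∀ᶠ i in l, ∃ x ∈ s, ε ≤ dist (f x) (F i x)) :
    ¬TendstoUniformlyOn F f l s := fun hu =>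
  let ⟨_, hi, x, hx, hle⟩ := ((Metric.tendstoUniformlyOn_iff.1 hu ε hε).and h).exists
  (hi x hx).not_ge hle

theorem Real.tendsto_exp_neg_natCast_mul_atTop {c : ℝ} (hc : 0 < c) :
    Tendsto (fun n : ℕ => Real.exp (-(n : ℝ) * c)) atTop (nhds 0) := by
  simpa only [neg_mul, Function.comp_def] using
    Real.tendsto_exp_neg_atTop_nhds_zero.comp (tendsto_natCast_atTop_atTop.atTop_mul_const hc)

theorem Complex.exp_div_succ_pow (z : ℂ) (k : ℕ) :
    Complex.exp (z / (k + 1)) ^ (k + 1) = Complex.exp z := by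
  rw [← Complex.exp_nat_mul]
  congr 1
  push_cast
  field_simp

theorem Complex.norm_exp_neg_ofReal_div_succ_le_one {t : ℝ} (ht : 0 ≤ t) (k : ℕ) :
    ‖Complex.exp (-(t : ℂ) / (k + 1))‖ ≤ 1 := by
  rw [show -(t : ℂ) / (k + 1) = ((-t / (k + 1) : ℝ) : ℂ) by push_cast; rfl,
    Complex.norm_exp_ofReal, Real.exp_le_one_iff]
  exact div_nonpos_of_nonpos_of_nonneg (neg_nonpos.2 ht) (by positivity)

theorem tsum_two_mul_exp_neg_div_succ_mul_ite_pow (t : ℂ) (n : ℕ) :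
    ∑' k : ℕ, (2 * (Complex.exp (-t / (k + 1)) * if k < n then (1 / 2 : ℂ) else 0)) ^ (k + 1)
      = n * Complex.exp (-t) := by
  have hterm : ∀ k ∈ Finset.range n,
      (2 * (Complex.exp (-t / (k + 1)) * if k < n then (1 / 2 : ℂ) else 0)) ^ (k + 1)
        = Complex.exp (-t) := by
    intro k hk
    rw [if_pos (Finset.mem_range.mp hk), ← Complex.exp_div_succ_pow (-t) k]
    ring
  rw [tsum_eq_sum (s := Finset.range n) fun k hk => by simp [Finset.mem_range.not.mp hk],
    Finset.sum_congr rfl hterm, Finset.sum_const, Finset.card_range, nsmul_eq_mul]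

/-- On the unit ball of `c₀` (here `C₀(ℕ, ℂ)`, with `x_k = x (k-1)` in
0-based indexing), with `F_t(x)_k = e^{-t/k}x_k` and `M(x) = exp(Σ_k (2x_k)^k)`, for any
map `N` with `|N(y) − 1| ≤ C‖y‖` on the unit ball, the points
`x⁽ⁿ⁾ = (1/2,…,1/2,0,…)` satisfy `M(F_t(x⁽ⁿ⁾))⁻¹ = e^{−n e^{−t}}` and
`|N(F_t(x⁽ⁿ⁾))M(F_t(x⁽ⁿ⁾))⁻¹ − 1| ≥ 1 − e^{−n e^{−t}}(1 + C/2)`; consequently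
`N(F_t(x))·M(F_t(x))⁻¹ → 1` fails to hold uniformly on the closed ball of radius 1/2. -/
theorem stmt_17
    (F : ℝ → C₀(ℕ, ℂ) → C₀(ℕ, ℂ))
    (hF : ∀ (t : ℝ) (x : C₀(ℕ, ℂ)) (k : ℕ),
      (F t x) k = Complex.exp (-(t : ℂ) / (k + 1)) * x k)
    (M : C₀(ℕ, ℂ) → ℂ)
    (hM : ∀ x : C₀(ℕ, ℂ), M x = Complex.exp (∑' k : ℕ, (2 * x k) ^ (k + 1)))
    (xn : ℕ → C₀(ℕ, ℂ))
    (hxn : ∀ n k : ℕ, (xn n) k = if k < n then (1 / 2 : ℂ) else 0)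
    (N : C₀(ℕ, ℂ) → ℂ) (C : ℝ) (hC : 0 < C)
    (hN : ∀ y : C₀(ℕ, ℂ), ‖y‖ ≤ 1 → ‖N y - 1‖ ≤ C * ‖y‖) :
    (∀ (n : ℕ) (t : ℝ), 0 < t →
      (M (F t (xn n)))⁻¹ = Complex.exp (-(n : ℂ) * Real.exp (-t)) ∧
      ‖N (F t (xn n)) * (M (F t (xn n)))⁻¹ - 1‖ ≥
        1 - Real.exp (-(n : ℝ) * Real.exp (-t)) * (1 + C / 2)) ∧
    ¬ TendstoUniformlyOn (fun (t : ℝ) (x : C₀(ℕ, ℂ)) => N (F t x) * (M (F t x))⁻¹)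
        (fun _ => (1 : ℂ)) atTop (Metric.closedBall 0 (1 / 2)) := by
  have hF_le (t : ℝ) (ht : 0 ≤ t) (x : C₀(ℕ, ℂ)) : ‖F t x‖ ≤ ‖x‖ :=
    ZeroAtInftyContinuousMap.norm_le_norm_of_forall_norm_apply_le fun k => by
      rw [hF, norm_mul]
      exact mul_le_of_le_one_left (norm_nonneg _) (Complex.norm_exp_neg_ofReal_div_succ_le_one ht k)
  have hxn_le (n : ℕ) : ‖xn n‖ ≤ 1 / 2 :=
    (xn n).norm_le_of_forall_norm_apply_le (by norm_num) fun k => by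
      rw [hxn]; split_ifs <;> norm_num
  have hMinv (n : ℕ) (t : ℝ) :
      (M (F t (xn n)))⁻¹ = (Real.exp (-(n : ℝ) * Real.exp (-t)) : ℂ) := by
    simp only [hM, hF, hxn, tsum_two_mul_exp_neg_div_succ_mul_ite_pow, ← Complex.exp_neg]
    push_cast
    ring_nf
  have hbound (n : ℕ) (t : ℝ) (ht : 0 < t) :
      ‖N (F t (xn n)) * (M (F t (xn n)))⁻¹ - 1‖ ≥
        1 - Real.exp (-(n : ℝ) * Real.exp (-t)) * (1 + C / 2) := by
    have hy : ‖F t (xn n)‖ ≤ 1 / 2 := (hF_le t ht.le _).trans (hxn_le n)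
    have hNy : ‖N (F t (xn n)) - 1‖ ≤ C / 2 :=
      (hN _ (hy.trans (by norm_num))).trans (by linarith [mul_le_mul_of_nonneg_left hy hC.le])
    simpa only [hMinv, Complex.norm_real, Real.norm_of_nonneg (Real.exp_pos _).le] using
      one_sub_norm_mul_le_norm_mul_sub_one (m := (M (F t (xn n)))⁻¹) hNy
  refine ⟨fun n t ht => ⟨by rw [hMinv]; push_cast; rfl, hbound n t ht⟩,
    not_tendstoUniformlyOn_of_eventually_exists_le_dist (ε := 1 / 2) (by norm_num) ?_⟩
  filter_upwards [eventually_gt_atTop 0] with t ht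
  obtain ⟨n, hn⟩ := (((Real.tendsto_exp_neg_natCast_mul_atTop (Real.exp_pos (-t))).mul_const
    (1 + C / 2)).eventually_lt_const (by norm_num : (0 : ℝ) * (1 + C / 2) < 1 / 2)).exists
  refine ⟨xn n, mem_closedBall_zero_iff.2 (hxn_le n), ?_⟩
  rw [Complex.dist_eq, norm_sub_rev]
  linarith [hbound n t ht]
end

section
/- Let D be the open unit ball of c₀ and Γ_t(x) = exp(Σ_{k=1}^∞ (2x_k)^k (1 − e^{−tk})), F_t(x) = e^{−t}x. Then {Γ_t} is a semicocycle over {F_t}: Γ_t(F_s(x))·Γ_s(x) = Γ_{t+s}(x) and Γ_0 ≡ 1; moreover Γ_t(x) = M(e^{−t}x)⁻¹ · M(x) where M(x) = exp(Σ_{k=1}^∞ (2x_k)^k). -/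
open scoped ZeroAtInfty
open Filter Topology

/- Everything reduces to the function `L x = Σ_k (2 x_k)^(k+1)`, which converges on all of `c₀`
since `2 x_k → 0`. Scaling `x` by `e^{-t}` multiplies the `k`-th term by `e^{-t(k+1)}`, so
`Γ_t(x) = exp (L x - L (e^{-t} x))`; the semicocycle law is then a telescoping sum in the
exponent, and `M = exp ∘ L`. -/

lemma summable_pow_succ_of_tendsto_zero {R : Type*} [NormedRing R] [CompleteSpace R]
    {u : ℕ → R} (hu : Tendsto u atTop (𝓝 0)) : Summable fun k => u k ^ (k + 1) := by
  have hsmall : ∀ᶠ k in atTop, ‖u k‖ ≤ 1 / 2 :=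
    (tendsto_zero_iff_norm_tendsto_zero.mp hu).eventually (eventually_le_nhds (by norm_num))
  refine ((summable_geometric_of_lt_one (by norm_num : (0 : ℝ) ≤ 1 / 2) (by norm_num)).comp_injective
    (add_left_injective 1)).of_norm_bounded_eventually_nat ?_
  filter_upwards [hsmall] with k hk
  calc ‖u k ^ (k + 1)‖ ≤ ‖u k‖ ^ (k + 1) := norm_pow_le' _ k.succ_pos
    _ ≤ (1 / 2) ^ (k + 1) := by gcongr

lemma ZeroAtInftyContinuousMap.tendsto_atTop_zero {E : Type*} [NormedAddCommGroup E]
    (x : C₀(ℕ, E)) : Tendsto x atTop (𝓝 0) :=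
  cocompact_eq_atTop (α := ℕ) ▸ zero_at_infty x

lemma summable_two_mul_pow_succ (x : C₀(ℕ, ℂ)) : Summable fun k => (2 * x k) ^ (k + 1) :=
  summable_pow_succ_of_tendsto_zero (by simpa using x.tendsto_atTop_zero.const_mul 2)

lemma two_mul_exp_smul_pow_succ (x : C₀(ℕ, ℂ)) (t : ℝ) (k : ℕ) :
    (2 * ((Real.exp (-t) : ℂ) • x) k) ^ (k + 1)
      = (2 * x k) ^ (k + 1) * Complex.exp (-(t : ℂ) * (k + 1)) := by
  have hexp : (Real.exp (-t) : ℂ) ^ (k + 1) = Complex.exp (-(t : ℂ) * (k + 1)) := by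
    rw [Complex.ofReal_exp, ← Complex.exp_nat_mul]
    push_cast
    ring_nf
  rw [ZeroAtInftyContinuousMap.coe_smul, Pi.smul_apply, smul_eq_mul, ← hexp]
  ring

lemma exp_tsum_mul_one_sub_exp (x : C₀(ℕ, ℂ)) (t : ℝ) :
    Complex.exp (∑' k : ℕ, (2 * x k) ^ (k + 1) * (1 - Complex.exp (-(t : ℂ) * (k + 1))))
      = Complex.exp ((∑' k : ℕ, (2 * x k) ^ (k + 1))
          - ∑' k : ℕ, (2 * ((Real.exp (-t) : ℂ) • x) k) ^ (k + 1)) := by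
  rw [← (summable_two_mul_pow_succ x).tsum_sub (summable_two_mul_pow_succ _)]
  simp only [two_mul_exp_smul_pow_succ, mul_one_sub]

lemma exp_smul_exp_smul (x : C₀(ℕ, ℂ)) (t s : ℝ) :
    (Real.exp (-t) : ℂ) • (Real.exp (-s) : ℂ) • x = (Real.exp (-(t + s)) : ℂ) • x := by
  rw [smul_smul, ← Complex.ofReal_mul, ← Real.exp_add, neg_add]

/-- On the open unit ball of `c₀ = C₀(ℕ, ℂ)` (0-based indexing, `x_k = x (k-1)`),
`Γ_t(x) = exp(Σ_k (2x_k)^k(1 − e^{−tk}))` is a semicocycle over `F_t(x) = e^{−t}x`, and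
`Γ_t(x) = M(e^{−t}x)⁻¹·M(x)` with `M(x) = exp(Σ_k (2x_k)^k)`. -/
theorem stmt_18
    (Γ : ℝ → C₀(ℕ, ℂ) → ℂ)
    (hΓ : ∀ (t : ℝ) (x : C₀(ℕ, ℂ)), Γ t x =
      Complex.exp (∑' k : ℕ, (2 * x k) ^ (k + 1) * (1 - Complex.exp (-(t : ℂ) * (k + 1)))))
    (M : C₀(ℕ, ℂ) → ℂ)
    (hM : ∀ x : C₀(ℕ, ℂ), M x = Complex.exp (∑' k : ℕ, (2 * x k) ^ (k + 1))) :
    ∀ x : C₀(ℕ, ℂ), ‖x‖ < 1 →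
      (∀ t s : ℝ, 0 ≤ t → 0 ≤ s →
        Γ t ((Real.exp (-s) : ℂ) • x) * Γ s x = Γ (t + s) x) ∧
      Γ 0 x = 1 ∧
      (∀ t : ℝ, 0 ≤ t → Γ t x = (M ((Real.exp (-t) : ℂ) • x))⁻¹ * M x) := by
  set L : C₀(ℕ, ℂ) → ℂ := fun x => ∑' k : ℕ, (2 * x k) ^ (k + 1)
  have hΓL : ∀ t x, Γ t x = Complex.exp (L x - L ((Real.exp (-t) : ℂ) • x)) := fun t x => by
    rw [hΓ, exp_tsum_mul_one_sub_exp]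
  intro x _
  refine ⟨fun t s _ _ => ?_, by simp [hΓL], fun t _ => ?_⟩
  · rw [hΓL, hΓL, hΓL, exp_smul_exp_smul, ← Complex.exp_add]
    ring_nf
  · rw [hΓL, hM, hM, Complex.exp_sub, inv_mul_eq_div]
end
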